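/- arXiv:1809.07742 — 2 statements merged into one kernel-verified Lean document; each statement's English description precedes it below -/
import Mathlib

section
/- Let κ ∈ ℝ and q ∈ [0,1). For any y > κ there is a unique solution h ∈ ℝ to the equation h + (1−q) F_q(h) = y, i.e. h + √(1−q)·𝓔((κ−h)/√(1−q)) = y. Moreover the map L_q(h) = h + √(1−q)·𝓔((κ−h)/√(1−q)) is strictly increasing with 0 < L_q′(h) < 1 for all h ∈ ℝ, and maps ℝ onto the interval (κ,∞). -/
open MeasureTheory Real Set Filter

noncomputable section

/-- The standard gaussian density `φ(x) = exp(-x²/2)/√(2π)`. -/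
def gphi (x : ℝ) : ℝ := Real.exp (-x ^ 2 / 2) / Real.sqrt (2 * Real.pi)

/-- The complementary gaussian distribution function `Φ̄(x) = ∫_x^∞ φ(u) du`. -/
def Phibar (x : ℝ) : ℝ := ∫ u in Set.Ioi x, gphi u

/-- `𝓔(x) = φ(x) / Φ̄(x)`. -/
def gaussE (x : ℝ) : ℝ := gphi x / Phibar x

/-- `F_q(x) = 𝓔((κ - x)/√(1-q)) / √(1-q)` (with threshold `κ`). -/
def Fq (κ q x : ℝ) : ℝ := gaussE ((κ - x) / Real.sqrt (1 - q)) / Real.sqrt (1 - q)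

/-- `P(ψ) = ∫ tanh(√ψ z)² φ(z) dz`. -/
def Pfun (ψ : ℝ) : ℝ := ∫ z : ℝ, Real.tanh (Real.sqrt ψ * z) ^ 2 * gphi z

/-- `R_κ(q, α) = α ∫ F_q(√q z)² φ(z) dz`. -/
def Rfun (κ q α : ℝ) : ℝ := α * ∫ z : ℝ, Fq κ q (Real.sqrt q * z) ^ 2 * gphi z

/-- `𝒢_κ(α, q, ψ)`. -/
def Gfun (κ α q ψ : ℝ) : ℝ :=
  -(ψ * (1 - q)) / 2 + (∫ z : ℝ, Real.log (2 * Real.cosh (Real.sqrt ψ * z)) * gphi z)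
    + α * ∫ z : ℝ, Real.log (Phibar ((κ - Real.sqrt q * z) / Real.sqrt (1 - q))) * gphi z

def alphaLB : ℝ := 0.833078599
def alphaUB : ℝ := 0.833078600
def qLB : ℝ := 0.56394907949
def qLU : ℝ := 0.56394907950
def qUL : ℝ := 0.56394908029
def qUB : ℝ := 0.56394908030
def psiLB : ℝ := 2.5763513100
def psiLU : ℝ := 2.5763513103
def psiUL : ℝ := 2.5763513221
def psiUB : ℝ := 2.5763513224

open Topology

/-!
`𝓔` is the inverse Mills ratio of the gaussian, and `𝓔' = 𝓔 (𝓔 - x)` because `Φ̄' = -φ`.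
The classical bounds `x < 𝓔(x) < (x + √(x² + 4))/2` make `0 < 𝓔' < 1`; the lower one comes from
`φ(x) = ∫_x^∞ u φ(u) du`, the upper one (Birnbaum) from `Φ̄ - φ / ((x + √(x² + 4))/2)` decreasing
to `0`. With `s = √(1 - q)` and `u = (κ - h)/s` we get `L_q' = 1 - 𝓔'(u) ∈ (0, 1)` and
`L_q(h) - κ = s (𝓔(u) - u) > 0`, which tends to `0` as `h → -∞` by the upper bound, while
`L_q(h) ≥ h`; the intermediate value theorem then gives the range `(κ, ∞)`.
-/

lemma gphi_pos (x : ℝ) : 0 < gphi x :=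
  div_pos (exp_pos _) (sqrt_pos.2 (by positivity))

lemma continuous_gphi : Continuous gphi := by
  unfold gphi; fun_prop

lemma hasDerivAt_gphi (x : ℝ) : HasDerivAt gphi (-x * gphi x) x := by
  have h : HasDerivAt gphi _ x :=
    (((hasDerivAt_pow 2 x).neg.div_const 2).exp).div_const √(2 * π)
  refine h.congr_deriv ?_
  unfold gphi; simp only [Pi.neg_apply]; push_cast; ring_nf

lemma integrable_gphi : Integrable gphi := by
  refine ((integrable_exp_neg_mul_sq (b := 1 / 2) (by norm_num)).div_const √(2 * π)).congr
    (Eventually.of_forall fun x => ?_)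
  unfold gphi; ring_nf

lemma tendsto_gphi_atTop : Tendsto gphi atTop (𝓝 0) := by
  have h : Tendsto (fun x : ℝ => -x ^ 2 / 2) atTop atBot :=
    (tendsto_neg_atTop_atBot.comp (tendsto_pow_atTop two_ne_zero)).atBot_div_const two_pos
  have h' : Tendsto gphi atTop (𝓝 (0 / √(2 * π))) :=
    (tendsto_exp_atBot.comp h).div_const √(2 * π)
  rwa [zero_div] at h'

lemma setIntegral_Ioi_pos {f : ℝ → ℝ} {a : ℝ} (hf : IntegrableOn f (Ioi a))
    (hpos : ∀ u ∈ Ioi a, 0 < f u) : 0 < ∫ u in Ioi a, f u := by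
  rw [setIntegral_pos_iff_support_of_nonneg_ae
      ((ae_restrict_iff' measurableSet_Ioi).2 (Eventually.of_forall fun u hu => (hpos u hu).le)) hf,
    inter_eq_right.2 fun u hu => Function.mem_support.2 (hpos u hu).ne', volume_Ioi]
  exact ENNReal.zero_lt_top

lemma Phibar_pos (x : ℝ) : 0 < Phibar x :=
  setIntegral_Ioi_pos integrable_gphi.integrableOn fun u _ => gphi_pos u

lemma Phibar_eq_sub_intervalIntegral (x : ℝ) :
    Phibar x = Phibar 0 - ∫ t in (0 : ℝ)..x, gphi t := by
  have hsplit {a b : ℝ} (hab : a ≤ b) : Phibar a = (∫ u in Ioc a b, gphi u) + Phibar b := by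
    rw [Phibar, ← Ioc_union_Ioi_eq_Ioi hab, setIntegral_union (Ioc_disjoint_Ioi le_rfl)
      measurableSet_Ioi integrable_gphi.integrableOn integrable_gphi.integrableOn]
    rfl
  rcases le_total 0 x with hx | hx
  · rw [intervalIntegral.integral_of_le hx, hsplit hx]; ring
  · rw [intervalIntegral.integral_of_ge hx, hsplit hx]; ring

lemma hasDerivAt_Phibar (x : ℝ) : HasDerivAt Phibar (-gphi x) x := by
  have h := intervalIntegral.integral_hasDerivAt_right (a := 0) (b := x)
    integrable_gphi.intervalIntegrable (continuous_gphi.stronglyMeasurableAtFilter _ _)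
    continuous_gphi.continuousAt
  rw [funext Phibar_eq_sub_intervalIntegral]
  exact h.const_sub (Phibar 0)

lemma tendsto_Phibar_atTop : Tendsto Phibar atTop (𝓝 0) := by
  have h : Tendsto (fun x => Phibar 0 - ∫ t in (0 : ℝ)..x, gphi t) atTop
      (𝓝 (Phibar 0 - Phibar 0)) :=
    tendsto_const_nhds.sub
      (intervalIntegral_tendsto_integral_Ioi 0 integrable_gphi.integrableOn tendsto_id)
  rw [sub_self] at h
  exact h.congr fun x => (Phibar_eq_sub_intervalIntegral x).symm

lemma mul_Phibar_lt_gphi (x : ℝ) : x * Phibar x < gphi x := by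
  rcases le_or_gt x 0 with hx | hx
  · exact (mul_nonpos_of_nonpos_of_nonneg hx (Phibar_pos x).le).trans_lt (gphi_pos x)
  have hderiv : ∀ u ∈ Ici x, HasDerivAt (fun v => -gphi v) (u * gphi u) u := fun u _ =>
    (hasDerivAt_gphi u).neg.congr_deriv (by ring)
  have hnonneg : ∀ u ∈ Ioi x, 0 ≤ u * gphi u := fun u hu =>
    mul_nonneg (hx.le.trans hu.le) (gphi_pos u).le
  have hlim : Tendsto (fun v => -gphi v) atTop (𝓝 0) := by simpa using tendsto_gphi_atTop.neg
  have hint := integrableOn_Ioi_deriv_of_nonneg' hderiv hnonneg hlim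
  have hφ : ∫ u in Ioi x, u * gphi u = gphi x := by
    simpa using integral_Ioi_of_hasDerivAt_of_nonneg' hderiv hnonneg hlim
  have hconst : IntegrableOn (fun u => x * gphi u) (Ioi x) :=
    (integrable_gphi.const_mul x).integrableOn
  have hgap : 0 < ∫ u in Ioi x, (u * gphi u - x * gphi u) :=
    setIntegral_Ioi_pos (hint.sub hconst) fun u hu => by
      nlinarith [gphi_pos u, mem_Ioi.1 hu]
  rw [integral_sub hint hconst, hφ, integral_const_mul] at hgap
  exact sub_pos.1 hgap

/-- The positive root of `t² = x t + 1`. -/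
def millsRoot (x : ℝ) : ℝ := (x + √(x ^ 2 + 4)) / 2

lemma abs_lt_sqrt_sq_add_four (x : ℝ) : |x| < √(x ^ 2 + 4) := by
  rw [← sqrt_sq_eq_abs]
  exact sqrt_lt_sqrt (sq_nonneg x) (by linarith)

lemma millsRoot_pos (x : ℝ) : 0 < millsRoot x := by
  unfold millsRoot; linarith [abs_lt_sqrt_sq_add_four x, neg_abs_le x]

lemma self_lt_millsRoot (x : ℝ) : x < millsRoot x := by
  unfold millsRoot; linarith [abs_lt_sqrt_sq_add_four x, le_abs_self x]

lemma millsRoot_lt_sqrt (x : ℝ) : millsRoot x < √(x ^ 2 + 4) := by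
  unfold millsRoot; linarith [abs_lt_sqrt_sq_add_four x, le_abs_self x]

lemma millsRoot_sq (x : ℝ) : millsRoot x ^ 2 = x * millsRoot x + 1 := by
  have h := sq_sqrt (show 0 ≤ x ^ 2 + 4 by positivity)
  unfold millsRoot; linear_combination h / 4

lemma millsRoot_sub_self (x : ℝ) : millsRoot x - x = (millsRoot x)⁻¹ :=
  eq_inv_of_mul_eq_one_left (by linear_combination millsRoot_sq x)

lemma tendsto_millsRoot_atTop : Tendsto millsRoot atTop atTop :=
  tendsto_atTop_mono (fun x => (self_lt_millsRoot x).le) tendsto_id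

lemma hasDerivAt_millsRoot (x : ℝ) :
    HasDerivAt millsRoot (millsRoot x / √(x ^ 2 + 4)) x := by
  have h : HasDerivAt millsRoot _ x := ((hasDerivAt_id x).add
    (((hasDerivAt_pow 2 x).add_const 4).sqrt (by positivity))).div_const 2
  refine h.congr_deriv ?_
  unfold millsRoot; field_simp; push_cast; ring

lemma strictAnti_Phibar_sub_gphi_div_millsRoot :
    StrictAnti fun x => Phibar x - gphi x / millsRoot x := by
  refine strictAnti_of_hasDerivAt_neg
    (f' := fun x => gphi x / millsRoot x * ((√(x ^ 2 + 4))⁻¹ - (millsRoot x)⁻¹))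
    (fun x => ?_) fun x => ?_
  · have hm := millsRoot_pos x
    refine ((hasDerivAt_Phibar x).sub
      ((hasDerivAt_gphi x).div (hasDerivAt_millsRoot x) hm.ne')).congr_deriv ?_
    field_simp
    linear_combination (-(gphi x * √(x ^ 2 + 4))) * millsRoot_sq x
  · exact mul_neg_of_pos_of_neg (div_pos (gphi_pos x) (millsRoot_pos x))
      (sub_neg.2 (inv_strictAnti₀ (millsRoot_pos x) (millsRoot_lt_sqrt x)))

lemma gphi_lt_millsRoot_mul_Phibar (x : ℝ) : gphi x < millsRoot x * Phibar x := by
  have hlim : Tendsto (fun x => Phibar x - gphi x / millsRoot x) atTop (𝓝 0) := by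
    simpa using tendsto_Phibar_atTop.sub (tendsto_gphi_atTop.div_atTop tendsto_millsRoot_atTop)
  have hpos := (strictAnti_Phibar_sub_gphi_div_millsRoot.antitone.le_of_tendsto hlim
    (x + 1)).trans_lt (strictAnti_Phibar_sub_gphi_div_millsRoot (lt_add_one x))
  rw [sub_pos, div_lt_iff₀ (millsRoot_pos x)] at hpos
  linarith

lemma gaussE_pos (x : ℝ) : 0 < gaussE x :=
  div_pos (gphi_pos x) (Phibar_pos x)

lemma lt_gaussE (x : ℝ) : x < gaussE x :=
  (lt_div_iff₀ (Phibar_pos x)).2 (mul_Phibar_lt_gphi x)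

lemma gaussE_lt_millsRoot (x : ℝ) : gaussE x < millsRoot x :=
  (div_lt_iff₀ (Phibar_pos x)).2 (gphi_lt_millsRoot_mul_Phibar x)

lemma hasDerivAt_gaussE (x : ℝ) : HasDerivAt gaussE (gaussE x * (gaussE x - x)) x := by
  have hP := (Phibar_pos x).ne'
  have h : HasDerivAt gaussE _ x := (hasDerivAt_gphi x).div (hasDerivAt_Phibar x) hP
  refine h.congr_deriv ?_
  unfold gaussE; field_simp; ring

lemma gaussE_mul_sub_self_pos (x : ℝ) : 0 < gaussE x * (gaussE x - x) :=
  mul_pos (gaussE_pos x) (sub_pos.2 (lt_gaussE x))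

lemma gaussE_mul_sub_self_lt_one (x : ℝ) : gaussE x * (gaussE x - x) < 1 := by
  have hgap : 0 < (millsRoot x - gaussE x) * (millsRoot x + gaussE x - x) :=
    mul_pos (sub_pos.2 (gaussE_lt_millsRoot x))
      (by linarith [millsRoot_pos x, lt_gaussE x])
  linear_combination hgap + millsRoot_sq x

lemma tendsto_gaussE_sub_self_atTop : Tendsto (fun x => gaussE x - x) atTop (𝓝 0) :=
  squeeze_zero (fun x => (sub_pos.2 (lt_gaussE x)).le)
    (fun x => by
      rw [Function.comp_apply, ← millsRoot_sub_self]; linarith [gaussE_lt_millsRoot x])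
    (tendsto_inv_atTop_zero.comp tendsto_millsRoot_atTop)

/-- `L_q` of the statement is `Lfun κ √(1 - q)`. -/
def Lfun (κ s h : ℝ) : ℝ := h + s * gaussE ((κ - h) / s)

section Lfun

variable (κ : ℝ) {s : ℝ}

lemma Lfun_eq_add_mul_gaussE_sub (hs : s ≠ 0) (h : ℝ) :
    Lfun κ s h = κ + s * (gaussE ((κ - h) / s) - (κ - h) / s) := by
  rw [Lfun, mul_sub, mul_div_cancel₀ _ hs]; ring

lemma lt_Lfun (hs : 0 < s) (h : ℝ) : κ < Lfun κ s h := by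
  rw [Lfun_eq_add_mul_gaussE_sub κ hs.ne', lt_add_iff_pos_right]
  exact mul_pos hs (sub_pos.2 (lt_gaussE _))

lemma hasDerivAt_Lfun (hs : s ≠ 0) (h : ℝ) :
    HasDerivAt (Lfun κ s)
      (1 - gaussE ((κ - h) / s) * (gaussE ((κ - h) / s) - (κ - h) / s)) h := by
  have hu : HasDerivAt (fun h' => (κ - h') / s) (-1 / s) h := by
    simpa using ((hasDerivAt_id h).const_sub κ).div_const s
  have hL : HasDerivAt (Lfun κ s) _ h :=
    (hasDerivAt_id h).add (((hasDerivAt_gaussE _).comp h hu).const_mul s)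
  refine hL.congr_deriv ?_
  field_simp
  ring

lemma deriv_Lfun_mem_Ioo (hs : s ≠ 0) (h : ℝ) : deriv (Lfun κ s) h ∈ Ioo 0 1 := by
  rw [(hasDerivAt_Lfun κ hs h).deriv]
  constructor
  · linarith [gaussE_mul_sub_self_lt_one ((κ - h) / s)]
  · linarith [gaussE_mul_sub_self_pos ((κ - h) / s)]

lemma strictMono_Lfun (hs : s ≠ 0) : StrictMono (Lfun κ s) :=
  strictMono_of_deriv_pos fun h => (deriv_Lfun_mem_Ioo κ hs h).1

lemma tendsto_Lfun_atTop (hs : 0 ≤ s) : Tendsto (Lfun κ s) atTop atTop :=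
  tendsto_atTop_mono (fun _ => le_add_of_nonneg_right (mul_nonneg hs (gaussE_pos _).le))
    tendsto_id

lemma tendsto_Lfun_atBot (hs : 0 < s) : Tendsto (Lfun κ s) atBot (𝓝 κ) := by
  have hu : Tendsto (fun h => (κ - h) / s) atBot atTop :=
    (tendsto_atTop_add_const_left atBot κ tendsto_neg_atBot_atTop).atTop_div_const hs
  rw [funext (Lfun_eq_add_mul_gaussE_sub κ hs.ne')]
  simpa using ((tendsto_gaussE_sub_self_atTop.comp hu).const_mul s).const_add κ

lemma range_Lfun (hs : 0 < s) : range (Lfun κ s) = Ioi κ := by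
  refine (range_subset_iff.2 (lt_Lfun κ hs)).antisymm ?_
  rw [← image_univ]
  exact isPreconnected_univ.intermediate_value_Ioi (by simp) (by simp)
    (continuous_iff_continuousAt.2 fun h =>
      (hasDerivAt_Lfun κ hs.ne' h).continuousAt).continuousOn
    (tendsto_Lfun_atBot κ hs) (tendsto_Lfun_atTop κ hs.le)

lemma add_one_sub_mul_Fq {q : ℝ} (hq : q < 1) (h : ℝ) :
    h + (1 - q) * Fq κ q h = Lfun κ √(1 - q) h := by
  have hs : √(1 - q) ≠ 0 := (sqrt_pos.2 (sub_pos.2 hq)).ne'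
  have hsq : √(1 - q) ^ 2 = 1 - q := sq_sqrt (sub_pos.2 hq).le
  rw [Fq, Lfun]
  field_simp
  linear_combination -gaussE ((κ - h) / √(1 - q)) * hsq

end Lfun

/-- Lemma 2.4. For `q ∈ [0,1)` and any `y > κ` there is a unique `h ∈ ℝ`
with `h + (1-q) F_q(h) = y`, i.e. `h + √(1-q) 𝓔((κ-h)/√(1-q)) = y`. Moreover the map
`L_q(h) = h + √(1-q) 𝓔((κ-h)/√(1-q))` is strictly increasing with `0 < L_q'(h) < 1`
everywhere, and maps `ℝ` onto `(κ, ∞)`. -/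
theorem Lq_strictMono_bijection (κ q : ℝ) (hq : q ∈ Set.Ico (0 : ℝ) 1) :
    (∀ h : ℝ, h + (1 - q) * Fq κ q h
        = h + Real.sqrt (1 - q) * gaussE ((κ - h) / Real.sqrt (1 - q))) ∧
    (∀ y : ℝ, κ < y → ∃! h : ℝ, h + (1 - q) * Fq κ q h = y) ∧
    StrictMono (fun h : ℝ => h + Real.sqrt (1 - q) * gaussE ((κ - h) / Real.sqrt (1 - q))) ∧
    (∀ h : ℝ,
      deriv (fun h' : ℝ => h' + Real.sqrt (1 - q) * gaussE ((κ - h') / Real.sqrt (1 - q))) h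
        ∈ Set.Ioo (0 : ℝ) 1) ∧
    Set.range (fun h : ℝ => h + Real.sqrt (1 - q) * gaussE ((κ - h) / Real.sqrt (1 - q)))
      = Set.Ioi κ := by
  have hs : 0 < √(1 - q) := sqrt_pos.2 (sub_pos.2 hq.2)
  have hFq := add_one_sub_mul_Fq κ hq.2
  refine ⟨hFq, fun y hy => ?_, strictMono_Lfun κ hs.ne', deriv_Lfun_mem_Ioo κ hs.ne',
    range_Lfun κ hs⟩
  simp only [hFq]
  exact (strictMono_Lfun κ hs.ne').injective.existsUnique_of_mem_range (range_Lfun κ hs ▸ hy)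
end
end

section
/- For H ∈ ℝ and A ∈ (0,∞) the following hold. If H = 0 then B_H(A) = S_H(A) = 1. For general H one has the symmetries S_H(A) = S_{−H}(A) and D_H(A) = D_{−H}(A). For H ≠ 0, the function A ↦ S_H(A) is strictly increasing on (0,∞), sandwiched by its boundary values lim_{A→0+} S_H(A) = 0 and lim_{A→∞} S_H(A) = √((1−|m|)/(1+|m|)). The function A ↦ D_H(A)/4 is also strictly increasing on (0,∞), sandwiched by its boundary values lim_{A→0+} D_H(A)/4 = −(1−|m|)²/4 and lim_{A→∞} D_H(A)/4 = (1−m²)/4; moreover D_H(1) = 0 and (D_H)′(1) = (1−m²)²/2. -/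
/-!
Write `m = tanh H` and `Δ = Δ_H(A)`. Then `Δ² = A²(1 - m²) + m²`, so `Δ` increases from
`|m|` (at `A = 0`) to `∞`, and `D_H = (1 - m²)(1 - 2/(Δ + 1))` is an increasing function of `Δ`;
its boundary limits are its values at `Δ = |m|` and `Δ = ∞`.

The conjugate identity `(Δ - m)(Δ + m) = A²(1 - m²)` gives `B_{-H} = B_H⁻¹`, hence
`S_{-H} = S_H`. For `H ≠ 0` and `μ = |m|` it also gives
`S_H(A) = A(1 - μ)/(Δ + μ) = (1 - μ)/g(1/A)` with `g(t) = SHDenom μ t = √(1 - μ² + μ²t²) + μt`,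
which is increasing on `[0, ∞)` with `g(0) = √(1 - μ²)` and `g(∞) = ∞`. In both cases the
two-sided bounds follow from strict monotonicity and the boundary limits.
-/

open MeasureTheory Real Set Filter

noncomputable section

/-- `Δ_H(A) = √(A² + m² - (Am)²)` where `m = tanh H`. -/
def DeltaH (H A : ℝ) : ℝ := Real.sqrt (A ^ 2 + Real.tanh H ^ 2 - (A * Real.tanh H) ^ 2)

/-- `B_H(A) = A(1+m)/(Δ_H(A) - m)` where `m = tanh H`. -/
def BH (H A : ℝ) : ℝ := A * (1 + Real.tanh H) / (DeltaH H A - Real.tanh H)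

/-- `S_H(A) = B_H(A)^{-sgn H}`. -/
def SH (H A : ℝ) : ℝ := BH H A ^ (-Real.sign H)

/-- `D_H(A) = (A² - 1)(1 - m²)²/(Δ_H(A) + 1)²` where `m = tanh H`. -/
def DH (H A : ℝ) : ℝ := (A ^ 2 - 1) * (1 - Real.tanh H ^ 2) ^ 2 / (DeltaH H A + 1) ^ 2

/-- The mass function of the measure `P_{H,D}` on `{-1,+1}²` (encoded by `Bool × Bool`,
with `true` for `+1`). -/
def PHD (H D : ℝ) : Bool × Bool → ℝ := fun p =>
  match p with
  | (true, true) => ((1 + Real.tanh H) ^ 2 + D) / 4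
  | (true, false) => (1 - Real.tanh H ^ 2 - D) / 4
  | (false, true) => (1 - Real.tanh H ^ 2 - D) / 4
  | (false, false) => ((1 - Real.tanh H) ^ 2 + D) / 4

/-- `Γ(H, D)`, the Shannon entropy of `P_{H,D}`. -/
def GammaHD (H D : ℝ) : ℝ := ∑ p : Bool × Bool, Real.negMulLog (PHD H D p)

/-- The spin value of a Boolean: `+1` or `-1`. -/
def spin (b : Bool) : ℝ := if b then 1 else -1

/-- The mass function of the probability measure `Q_{A,B}` on `{-1,+1}²`, with
`a = (log A)/2`, `b = (log B)/2`. -/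
def QAB (A B : ℝ) : Bool × Bool → ℝ := fun p =>
  4 * Real.exp (Real.log A / 2 * (spin p.1 * spin p.2 - 1)
      + Real.log B / 2 * (spin p.1 + spin p.2)) / (B + 1 / B + 2 / A)

open Topology

section Sandwich

variable {α β : Type*} [LinearOrder α] [TopologicalSpace α] [OrderTopology α]
  [DenselyOrdered α] [NoMaxOrder α] [LinearOrder β] [TopologicalSpace β] [OrderClosedTopology β]

theorem StrictMonoOn.mem_Ioo_of_tendsto {f : α → β} {a x : α} {l u : β}
    (hf : StrictMonoOn f (Ioi a)) (hl : Tendsto f (𝓝[>] a) (𝓝 l))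
    (hu : Tendsto f atTop (𝓝 u)) (hx : a < x) : f x ∈ Ioo l u := by
  obtain ⟨y, hay, hyx⟩ := exists_between hx
  obtain ⟨z, hxz⟩ := exists_gt x
  have : Nonempty α := ⟨a⟩
  have hly : l ≤ f y :=
    le_of_tendsto hl <| eventually_of_mem (Ioo_mem_nhdsGT hay) fun w hw ↦ (hf hw.1 hay hw.2).le
  have hzu : f z ≤ u :=
    ge_of_tendsto hu <| (eventually_ge_atTop z).mono fun w hw ↦
      hf.monotoneOn (hx.trans hxz) (hx.trans (hxz.trans_le hw)) hw
  exact ⟨hly.trans_lt (hf hay hx hyx), (hf hx (hx.trans hxz) hxz).trans_le hzu⟩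

end Sandwich

lemma abs_tanh_pos {H : ℝ} (hH : H ≠ 0) : 0 < |tanh H| :=
  abs_pos.2 <| by simpa only [tanh_zero] using tanh_injective.ne hH

lemma tanh_neg_of_neg {H : ℝ} (hH : H < 0) : tanh H < 0 := by
  rw [tanh_eq_sinh_div_cosh]
  exact div_neg_of_neg_of_pos (sinh_neg_iff.2 hH) (cosh_pos H)

section DeltaH

variable (H : ℝ)

lemma DeltaH_eq_sqrt (A : ℝ) : DeltaH H A = √(A ^ 2 * (1 - tanh H ^ 2) + tanh H ^ 2) := by
  rw [DeltaH]; ring_nf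

lemma DeltaH_sq (A : ℝ) : DeltaH H A ^ 2 = A ^ 2 * (1 - tanh H ^ 2) + tanh H ^ 2 := by
  rw [DeltaH_eq_sqrt, sq_sqrt]
  nlinarith [tanh_sq_lt_one H, sq_nonneg A]

lemma DeltaH_nonneg (A : ℝ) : 0 ≤ DeltaH H A := sqrt_nonneg _

lemma DeltaH_neg : DeltaH (-H) = DeltaH H := by
  ext A; simp only [DeltaH, tanh_neg, neg_sq, mul_neg]

lemma DeltaH_zero : DeltaH H 0 = |tanh H| := by
  simp [DeltaH, sqrt_sq_eq_abs]

lemma DeltaH_one : DeltaH H 1 = 1 := by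
  simp [DeltaH]

lemma continuous_DeltaH : Continuous (DeltaH H) := by
  unfold DeltaH; fun_prop

lemma strictMonoOn_DeltaH : StrictMonoOn (DeltaH H) (Ici 0) := by
  intro a ha b hb hab
  have hm := tanh_sq_lt_one H
  rw [DeltaH_eq_sqrt, DeltaH_eq_sqrt]
  apply sqrt_lt_sqrt (by nlinarith [sq_nonneg a])
  have hab2 : a ^ 2 < b ^ 2 := pow_lt_pow_left₀ hab ha two_ne_zero
  nlinarith

lemma abs_tanh_lt_DeltaH {A : ℝ} (hA : 0 < A) : |tanh H| < DeltaH H A :=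
  DeltaH_zero H ▸ strictMonoOn_DeltaH H self_mem_Ici hA.le hA

lemma tendsto_DeltaH_atTop : Tendsto (DeltaH H) atTop atTop := by
  have hm : 0 < 1 - tanh H ^ 2 := by linarith [tanh_sq_lt_one H]
  rw [funext (DeltaH_eq_sqrt H)]
  exact tendsto_sqrt_atTop.comp <| tendsto_atTop_add_const_right _ _ <|
    (tendsto_pow_atTop (n := 2) two_ne_zero).atTop_mul_const hm

lemma DeltaH_div_self {A : ℝ} (hA : 0 < A) :
    DeltaH H A / A = √(1 - tanh H ^ 2 + (tanh H * A⁻¹) ^ 2) := by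
  have h : A ^ 2 * (1 - tanh H ^ 2) + tanh H ^ 2
      = A ^ 2 * (1 - tanh H ^ 2 + (tanh H * A⁻¹) ^ 2) := by
    field_simp
  rw [DeltaH_eq_sqrt, h, sqrt_mul (sq_nonneg A), sqrt_sq hA.le]
  field_simp

end DeltaH

section DH

variable (H : ℝ)

lemma DH_neg : DH (-H) = DH H := by
  ext A; simp only [DH, DeltaH_neg, tanh_neg, neg_sq]

lemma DH_eq (A : ℝ) : DH H A = (1 - tanh H ^ 2) * (1 - 2 / (DeltaH H A + 1)) := by
  have hΔ : DeltaH H A + 1 ≠ 0 := by linarith [DeltaH_nonneg H A]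
  rw [DH]
  field_simp
  linear_combination -(1 - tanh H ^ 2) * DeltaH_sq H A

lemma DH_zero : DH H 0 = -(1 - |tanh H|) ^ 2 := by
  rw [DH_eq, DeltaH_zero, ← sq_abs (tanh H)]
  have : |tanh H| + 1 ≠ 0 := by positivity
  field_simp
  ring

lemma DH_one : DH H 1 = 0 := by
  simp [DH]

lemma continuous_DH : Continuous (DH H) := by
  unfold DH
  exact Continuous.div (by fun_prop) (((continuous_DeltaH H).add continuous_const).pow 2)
    fun A ↦ by positivity [DeltaH_nonneg H A]

lemma strictMonoOn_DH : StrictMonoOn (DH H) (Ici 0) := by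
  intro a ha b hb hab
  have hm : 0 < 1 - tanh H ^ 2 := by linarith [tanh_sq_lt_one H]
  have hΔ := strictMonoOn_DeltaH H ha hb hab
  rw [DH_eq, DH_eq]
  gcongr
  linarith [DeltaH_nonneg H a]

lemma tendsto_DH_nhdsGT_zero : Tendsto (DH H) (𝓝[>] 0) (𝓝 (-(1 - |tanh H|) ^ 2)) :=
  DH_zero H ▸ tendsto_nhdsWithin_of_tendsto_nhds ((continuous_DH H).tendsto 0)

lemma tendsto_DH_atTop : Tendsto (DH H) atTop (𝓝 (1 - tanh H ^ 2)) := by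
  have h := (tendsto_const_nhds (x := (2 : ℝ))).div_atTop
    (tendsto_atTop_add_const_right _ 1 (tendsto_DeltaH_atTop H))
  simpa only [funext (DH_eq H), sub_zero, mul_one] using (h.const_sub 1).const_mul (1 - tanh H ^ 2)

lemma deriv_DH_one : deriv (DH H) 1 = (1 - tanh H ^ 2) ^ 2 / 2 := by
  have hΔ : DifferentiableAt ℝ (DeltaH H) 1 := by
    unfold DeltaH
    exact DifferentiableAt.sqrt (by fun_prop) (by simp)
  have hv : DifferentiableAt ℝ (fun A ↦ (1 - tanh H ^ 2) ^ 2 / (DeltaH H A + 1) ^ 2) 1 :=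
    (differentiableAt_const _).div ((hΔ.add_const 1).pow 2) (by simp [DeltaH_one])
  have hDH : DH H = fun A ↦ (A ^ 2 - 1) * ((1 - tanh H ^ 2) ^ 2 / (DeltaH H A + 1) ^ 2) := by
    ext A; rw [DH, mul_div_assoc]
  rw [hDH]
  -- the factor `A² - 1` vanishes at `1`, so the derivative of the other factor drops out
  refine (((hasDerivAt_pow 2 1).sub_const 1).mul hv.hasDerivAt).deriv.trans ?_
  simp only [DeltaH_one]
  ring

end DH

def SHDenom (μ t : ℝ) : ℝ := √(1 - μ ^ 2 + (μ * t) ^ 2) + μ * t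

section SHDenom

variable {μ : ℝ}

lemma continuous_SHDenom : Continuous (SHDenom μ) := by
  unfold SHDenom; fun_prop

lemma SHDenom_zero : SHDenom μ 0 = √(1 - μ ^ 2) := by
  simp [SHDenom]

lemma strictMonoOn_SHDenom (hμ : 0 < μ) : StrictMonoOn (SHDenom μ) (Ici 0) := by
  intro s hs t ht hst
  have hsqrt : √(1 - μ ^ 2 + (μ * s) ^ 2) ≤ √(1 - μ ^ 2 + (μ * t) ^ 2) := by
    have : 0 ≤ μ * s := mul_nonneg hμ.le hs
    gcongr
  have hlin : μ * s < μ * t := mul_lt_mul_of_pos_left hst hμ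
  simp only [SHDenom]
  linarith

lemma SHDenom_pos (hμ : 0 < μ) (hμ1 : μ < 1) {t : ℝ} (ht : 0 ≤ t) : 0 < SHDenom μ t :=
  calc 0 < SHDenom μ 0 := by rw [SHDenom_zero]; exact sqrt_pos.2 (by nlinarith)
    _ ≤ SHDenom μ t := (strictMonoOn_SHDenom hμ).monotoneOn self_mem_Ici ht ht

lemma tendsto_SHDenom_atTop (hμ : 0 < μ) : Tendsto (SHDenom μ) atTop atTop :=
  tendsto_atTop_mono (fun _ ↦ le_add_of_nonneg_left (sqrt_nonneg _))
    (tendsto_id.const_mul_atTop hμ)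

end SHDenom

section SH

variable {H A : ℝ}

lemma BH_zero (hA : 0 < A) : BH 0 A = 1 := by
  simp [BH, DeltaH, sqrt_sq hA.le, hA.ne']

lemma SH_zero (A : ℝ) : SH 0 A = 1 := by
  simp [SH]

lemma DeltaH_sub_tanh_pos (hA : 0 < A) : 0 < DeltaH H A - tanh H := by
  linarith [le_abs_self (tanh H), abs_tanh_lt_DeltaH H hA]

lemma DeltaH_add_tanh_pos (hA : 0 < A) : 0 < DeltaH H A + tanh H := by
  linarith [neg_abs_le (tanh H), abs_tanh_lt_DeltaH H hA]

lemma BH_nonneg (hA : 0 < A) : 0 ≤ BH H A :=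
  div_nonneg (mul_nonneg hA.le (by linarith [neg_one_lt_tanh H])) (DeltaH_sub_tanh_pos hA).le

lemma BH_neg (hA : 0 < A) : BH (-H) A = (BH H A)⁻¹ := by
  have hm : 0 < 1 + tanh H := by linarith [neg_one_lt_tanh H]
  rw [BH, BH, DeltaH_neg, tanh_neg, inv_div, sub_neg_eq_add,
    div_eq_div_iff (DeltaH_add_tanh_pos hA).ne' (by positivity)]
  linear_combination -DeltaH_sq H A

lemma SH_neg (hA : 0 < A) : SH (-H) A = SH H A := by
  rw [SH, SH, BH_neg hA, sign_neg, neg_neg, inv_rpow (BH_nonneg hA), ← rpow_neg (BH_nonneg hA)]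

lemma SH_of_neg (hH : H < 0) : SH H A = A * (1 - |tanh H|) / (DeltaH H A + |tanh H|) := by
  rw [SH, sign_of_neg hH, neg_neg, rpow_one, BH, abs_of_neg (tanh_neg_of_neg hH), sub_neg_eq_add,
    ← sub_eq_add_neg]

lemma SH_of_ne_zero (hH : H ≠ 0) (hA : 0 < A) :
    SH H A = A * (1 - |tanh H|) / (DeltaH H A + |tanh H|) := by
  rcases hH.lt_or_gt with hH | hH
  · exact SH_of_neg hH
  · rw [← SH_neg hA, SH_of_neg (neg_lt_zero.2 hH), DeltaH_neg, tanh_neg, abs_neg]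

lemma SH_eq_div_SHDenom (hH : H ≠ 0) (hA : 0 < A) :
    SH H A = (1 - |tanh H|) / SHDenom |tanh H| A⁻¹ := by
  have hΔ : √(1 - |tanh H| ^ 2 + (|tanh H| * A⁻¹) ^ 2) = DeltaH H A / A := by
    rw [DeltaH_div_self H hA, mul_pow, mul_pow, sq_abs]
  rw [SH_of_ne_zero hH hA, SHDenom, hΔ]
  field_simp

lemma strictMonoOn_SH (hH : H ≠ 0) : StrictMonoOn (SH H) (Ioi 0) := by
  intro a ha b hb hab
  have hμ := abs_tanh_pos hH
  rw [SH_eq_div_SHDenom hH ha, SH_eq_div_SHDenom hH hb]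
  refine div_lt_div_of_pos_left (by linarith [abs_tanh_lt_one H])
    (SHDenom_pos hμ (abs_tanh_lt_one H) (inv_nonneg.2 hb.le)) ?_
  exact strictMonoOn_SHDenom hμ (mem_Ici.2 (inv_nonneg.2 hb.le)) (mem_Ici.2 (inv_nonneg.2 ha.le))
    ((inv_lt_inv₀ hb ha).2 hab)

lemma tendsto_SH_nhdsGT_zero (hH : H ≠ 0) : Tendsto (SH H) (𝓝[>] 0) (𝓝 0) := by
  have h : Tendsto (fun A ↦ (1 - |tanh H|) / SHDenom |tanh H| A⁻¹) (𝓝[>] 0) (𝓝 0) :=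
    tendsto_const_nhds.div_atTop
      ((tendsto_SHDenom_atTop (abs_tanh_pos hH)).comp tendsto_inv_nhdsGT_zero)
  exact h.congr' (eventually_nhdsWithin_of_forall fun A hA ↦ (SH_eq_div_SHDenom hH hA).symm)

lemma tendsto_SH_atTop (hH : H ≠ 0) :
    Tendsto (SH H) atTop (𝓝 √((1 - |tanh H|) / (1 + |tanh H|))) := by
  set μ := |tanh H|
  have hμ : 0 < μ := abs_tanh_pos hH
  have hμ1 : μ < 1 := abs_tanh_lt_one H
  have hlim : √((1 - μ) / (1 + μ)) = (1 - μ) / SHDenom μ 0 := by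
    have hsq : (1 - μ) / (1 + μ) = (1 - μ) ^ 2 / (1 - μ ^ 2) := by
      rw [div_eq_div_iff (by positivity) (by nlinarith)]
      ring
    rw [SHDenom_zero, hsq, sqrt_div' _ (by nlinarith), sqrt_sq (by linarith)]
  have h : Tendsto (fun A ↦ (1 - μ) / SHDenom μ A⁻¹) atTop
      (𝓝 ((1 - μ) / SHDenom μ 0)) :=
    tendsto_const_nhds.div ((continuous_SHDenom.tendsto 0).comp tendsto_inv_atTop_zero)
      (SHDenom_pos hμ hμ1 le_rfl).ne'
  rw [hlim]
  exact h.congr' ((eventually_gt_atTop 0).mono fun A hA ↦ (SH_eq_div_SHDenom hH hA).symm)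

end SH

/-- Lemma 6.4(a). Properties of `B_H`, `S_H`, `D_H` on `A ∈ (0,∞)`:
if `H = 0` then `B_H(A) = S_H(A) = 1`; the symmetries `S_H = S_{-H}` and `D_H = D_{-H}`;
for `H ≠ 0`, `A ↦ S_H(A)` is strictly increasing on `(0,∞)`, sandwiched by its boundary
values `0` (as `A → 0⁺`) and `√((1-|m|)/(1+|m|))` (as `A → ∞`); `A ↦ D_H(A)/4` is strictly
increasing on `(0,∞)`, sandwiched by `-(1-|m|)²/4` and `(1-m²)/4`; and `D_H(1) = 0` with
`(D_H)'(1) = (1-m²)²/2`. -/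
theorem SH_DH_properties (H A : ℝ) (hA : 0 < A) :
    (H = 0 → BH H A = 1 ∧ SH H A = 1) ∧
    SH H A = SH (-H) A ∧
    DH H A = DH (-H) A ∧
    (H ≠ 0 →
      StrictMonoOn (SH H) (Set.Ioi 0) ∧
      Filter.Tendsto (SH H) (nhdsWithin 0 (Set.Ioi 0)) (nhds 0) ∧
      Filter.Tendsto (SH H) Filter.atTop
        (nhds (Real.sqrt ((1 - |Real.tanh H|) / (1 + |Real.tanh H|)))) ∧
      SH H A ∈ Set.Ioo 0 (Real.sqrt ((1 - |Real.tanh H|) / (1 + |Real.tanh H|)))) ∧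
    StrictMonoOn (fun A' => DH H A' / 4) (Set.Ioi 0) ∧
    Filter.Tendsto (fun A' => DH H A' / 4) (nhdsWithin 0 (Set.Ioi 0))
      (nhds (-(1 - |Real.tanh H|) ^ 2 / 4)) ∧
    Filter.Tendsto (fun A' => DH H A' / 4) Filter.atTop
      (nhds ((1 - Real.tanh H ^ 2) / 4)) ∧
    DH H A / 4 ∈ Set.Ioo (-(1 - |Real.tanh H|) ^ 2 / 4) ((1 - Real.tanh H ^ 2) / 4) ∧
    DH H 1 = 0 ∧
    deriv (DH H) 1 = (1 - Real.tanh H ^ 2) ^ 2 / 2 := by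
  have hD0 := (tendsto_DH_nhdsGT_zero H).div_const 4
  have hDtop := (tendsto_DH_atTop H).div_const 4
  have hDmono : StrictMonoOn (fun A' ↦ DH H A' / 4) (Ioi 0) := fun a ha b hb hab ↦
    div_lt_div_of_pos_right
      (strictMonoOn_DH H (mem_Ici_of_Ioi ha) (mem_Ici_of_Ioi hb) hab) four_pos
  refine ⟨fun hH ↦ ?_, (SH_neg hA).symm, by rw [DH_neg], fun hH ↦ ?_, hDmono, hD0, hDtop,
    hDmono.mem_Ioo_of_tendsto hD0 hDtop hA, DH_one H, deriv_DH_one H⟩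
  · subst hH
    exact ⟨BH_zero hA, SH_zero A⟩
  · have hS0 := tendsto_SH_nhdsGT_zero hH
    have hStop := tendsto_SH_atTop hH
    exact ⟨strictMonoOn_SH hH, hS0, hStop, (strictMonoOn_SH hH).mem_Ioo_of_tendsto hS0 hStop hA⟩
end
end
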